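/- Additive spectral decomposition: in the setting of the encoded pairwise cost function f (N registers, centered pairwise tables β_{i,j}, unary tables α_i, indicator polynomials x_{i,c}), define for each k ≥ 1 the degree-k spectral power P_k = ∑_{|S|=k} f̂(S)², the unary contribution P_k^{(i)} = ∑_{T ⊆ register i, |T|=k} (2^{−D_i} ∑_c α_i(c) ∏_{q∈T} s^{(i,c)}_q)², and the pairwise contribution P_k^{(i,j)} = ∑_{T_i,T_j nonempty, |T_i|+|T_j|=k} (2^{−(D_i+D_j)} ∑_{c_i,c_j} β_{i,j}(c_i,c_j) ∏_{q∈T_i} s^{(i,c_i)}_q ∏_{q∈T_j} s^{(j,c_j)}_q)². Then P_k = ∑_{i=1}^N P_k^{(i)} + ∑_{i<j} P_k^{(i,j)}; moreover P_k^{(i)} = 0 for k > D_i, and P_k^{(i,j)} = 0 for k ≤ 1 or k > D_i + D_j. -/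

import Mathlib

open Finset

/-- The Ising point of the hypercube `{−1,+1}^ι` corresponding to a bit vector. -/
noncomputable def toSign {ι : Type*} (b : ι → Bool) : ι → ℝ :=
  fun q => if b q then 1 else -1

/-- The Walsh coefficient `f̂(T) = E_z[f(z) χ_T(z)]` under the uniform measure on the
hypercube `{−1,+1}^ι`. -/
noncomputable def walshCoeff {ι : Type*} [Fintype ι] [DecidableEq ι]
    (f : (ι → ℝ) → ℝ) (T : Finset ι) : ℝ :=
  ((2 : ℝ) ^ Fintype.card ι)⁻¹ * ∑ b : ι → Bool, f (toSign b) * ∏ q ∈ T, toSign b q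

/-- The indicator polynomial `x_{i,c}(z_i) = 2^{−D_i} ∏_q (1 + s^{(i,c)}_q z_{i,q})`. -/
noncomputable def indicatorPoly {N : ℕ} (D m : Fin N → ℕ)
    (s : ∀ i, Fin (m i) → Fin (D i) → ℝ) (i : Fin N) (c : Fin (m i))
    (z : ((i : Fin N) × Fin (D i)) → ℝ) : ℝ :=
  ((2 : ℝ) ^ D i)⁻¹ * ∏ q : Fin (D i), (1 + s i c q * z ⟨i, q⟩)

/-- The exact-binary encoded pairwise cost function. -/
noncomputable def encodedF {N : ℕ} (D m : Fin N → ℕ)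
    (s : ∀ i, Fin (m i) → Fin (D i) → ℝ)
    (α : ∀ i, Fin (m i) → ℝ) (β : ∀ i j, Fin (m i) → Fin (m j) → ℝ)
    (z : ((i : Fin N) × Fin (D i)) → ℝ) : ℝ :=
  (∑ i : Fin N, ∑ c : Fin (m i), α i c * indicatorPoly D m s i c z) +
    ∑ i : Fin N, ∑ j : Fin N,
      if i < j then
        ∑ ci : Fin (m i), ∑ cj : Fin (m j),
          β i j ci cj * indicatorPoly D m s i ci z * indicatorPoly D m s j cj z
      else 0

/-- The degree-`k` spectral power `P_k = ∑_{|S|=k} f̂(S)²` of the encoded cost. -/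
noncomputable def specPower {N : ℕ} (D m : Fin N → ℕ)
    (s : ∀ i, Fin (m i) → Fin (D i) → ℝ)
    (α : ∀ i, Fin (m i) → ℝ) (β : ∀ i j, Fin (m i) → Fin (m j) → ℝ) (k : ℕ) : ℝ :=
  ∑ S ∈ Finset.univ.filter
      (fun S : Finset ((i : Fin N) × Fin (D i)) => S.card = k),
    (walshCoeff (encodedF D m s α β) S) ^ 2

/-- The unary degree-`k` spectral contribution `P_k^{(i)}`. -/
noncomputable def unaryPower {N : ℕ} (D m : Fin N → ℕ)
    (s : ∀ i, Fin (m i) → Fin (D i) → ℝ)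
    (α : ∀ i, Fin (m i) → ℝ) (i : Fin N) (k : ℕ) : ℝ :=
  ∑ T ∈ Finset.univ.filter (fun T : Finset (Fin (D i)) => T.card = k),
    (((2 : ℝ) ^ D i)⁻¹ * ∑ c : Fin (m i), α i c * ∏ q ∈ T, s i c q) ^ 2

/-- The pairwise bidegree-`k` spectral contribution `P_k^{(i,j)}`. -/
noncomputable def pairPower {N : ℕ} (D m : Fin N → ℕ)
    (s : ∀ i, Fin (m i) → Fin (D i) → ℝ)
    (β : ∀ i j, Fin (m i) → Fin (m j) → ℝ) (i j : Fin N) (k : ℕ) : ℝ :=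
  ∑ p ∈ Finset.univ.filter
      (fun p : Finset (Fin (D i)) × Finset (Fin (D j)) =>
        p.1.Nonempty ∧ p.2.Nonempty ∧ p.1.card + p.2.card = k),
    (((2 : ℝ) ^ (D i + D j))⁻¹ *
      ∑ ci : Fin (m i), ∑ cj : Fin (m j),
        β i j ci cj * (∏ q ∈ p.1, s i ci q) * ∏ q ∈ p.2, s j cj q) ^ 2


/-!
Expanding each indicator polynomial multilinearly writes `f` as a sum of Walsh monomials `χ_U`,
where `U` is either a set `T` of coordinates of one register (coefficient `unaryCoeff`) or a union
`T_i ∪ T_j` of coordinates of two registers (coefficient `pairCoeff`). Centering kills the pairwise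
terms with `T_i = ∅` or `T_j = ∅`, so among the remaining nonzero terms a nonempty `U` determines
its registers and its parts in them: distinct terms carry distinct monomials. By orthogonality of
the characters `f̂(U)` is then the coefficient of the unique term with monomial `U`, and the sum of
`f̂(U)²` over `|U| = k ≥ 1` splits into the unary and the pairwise contributions.
-/

theorem Finset.sq_sum_eq_sum_sq_of_subsingleton {ι R : Type*} [CommSemiring R] {s : Finset ι}
    {f : ι → R} (hf : ∀ x ∈ s, ∀ y ∈ s, f x ≠ 0 → f y ≠ 0 → x = y) :
    (∑ x ∈ s, f x) ^ 2 = ∑ x ∈ s, f x ^ 2 := by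
  by_cases h : ∃ x ∈ s, f x ≠ 0
  · obtain ⟨x, hx, hfx⟩ := h
    have hzero : ∀ y ∈ s, y ≠ x → f y = 0 := fun y hy hyx => by
      by_contra hfy
      exact hyx (hf y hy x hx hfy hfx)
    rw [Finset.sum_eq_single_of_mem x hx hzero,
      Finset.sum_eq_single_of_mem x hx fun y hy hyx => by rw [hzero y hy hyx, sq, mul_zero]]
  · simp only [not_exists, not_and, not_not] at h
    rw [Finset.sum_eq_zero h, Finset.sum_eq_zero fun y hy => by rw [h y hy, sq, mul_zero], sq,
      mul_zero]

section Walsh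

variable {ι : Type*} [Fintype ι] [DecidableEq ι]

theorem sum_prod_toSign_mul_prod_toSign (U S : Finset ι) :
    ∑ b : ι → Bool, (∏ q ∈ U, toSign b q) * ∏ q ∈ S, toSign b q
      = if U = S then (2 : ℝ) ^ Fintype.card ι else 0 := by
  let g (q : ι) (x : Bool) : ℝ :=
    (if q ∈ U then (if x then 1 else -1) else 1) * (if q ∈ S then (if x then 1 else -1) else 1)
  have hg (q : ι) : ∑ x, g q x = if (q ∈ U ↔ q ∈ S) then 2 else 0 := by
    by_cases hU : q ∈ U <;> by_cases hS : q ∈ S <;> norm_num [g, hU, hS]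
  calc _ = ∑ b : ι → Bool, ∏ q, g q (b q) := by
        simp_rw [← Fintype.prod_ite_mem U, ← Fintype.prod_ite_mem S, ← Finset.prod_mul_distrib]
        rfl
    _ = _ := by
        rw [← Fintype.prod_sum]
        simp_rw [hg, Fintype.prod_ite_zero, ← Finset.ext_iff, Finset.prod_const, Finset.card_univ]

theorem walshCoeff_sum_monomial {X : Type*} [Fintype X] (w : X → ℝ) (e : X → Finset ι)
    (S : Finset ι) :
    walshCoeff (fun z => ∑ x, w x * ∏ p ∈ e x, z p) S = ∑ x with e x = S, w x := by
  simp_rw [walshCoeff, Finset.sum_mul, mul_assoc]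
  rw [Finset.sum_comm]
  simp_rw [← Finset.mul_sum, sum_prod_toSign_mul_prod_toSign]
  rw [Finset.sum_filter, Finset.mul_sum]
  refine Finset.sum_congr rfl fun x _ => ?_
  split_ifs
  · field_simp
  · rw [mul_zero, mul_zero]

theorem sum_sq_walshCoeff_sum_monomial {X : Type*} [Fintype X] (w : X → ℝ)
    (e : X → Finset ι) (k : ℕ)
    (he : ∀ x y, (e x).card = k → w x ≠ 0 → w y ≠ 0 → e x = e y → x = y) :
    ∑ S with S.card = k, walshCoeff (fun z => ∑ x, w x * ∏ p ∈ e x, z p) S ^ 2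
      = ∑ x with (e x).card = k, w x ^ 2 := by
  calc _ = ∑ S with S.card = k, ∑ x with e x = S, w x ^ 2 := by
        refine Finset.sum_congr rfl fun S hS => ?_
        rw [walshCoeff_sum_monomial]
        refine Finset.sq_sum_eq_sum_sq_of_subsingleton fun x hx y hy hwx hwy => ?_
        rw [Finset.mem_filter] at hx hy hS
        exact he x y (hx.2 ▸ hS.2) hwx hwy (hx.2.trans hy.2.symm)
    _ = _ := by
        rw [Finset.sum_fiberwise_eq_sum_filter]
        simp only [Finset.mem_filter, Finset.mem_univ, true_and]

end Walsh

theorem Finset.eq_and_eq_of_pair_eq_pair {α : Type*} [LinearOrder α] {a b c d : α} (hab : a < b)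
    (hcd : c < d) (h : ({a, b} : Finset α) = {c, d}) : a = c ∧ b = d := by
  have ha : a ∈ ({c, d} : Finset α) := h ▸ by simp
  have hb : b ∈ ({c, d} : Finset α) := h ▸ by simp
  simp only [Finset.mem_insert, Finset.mem_singleton] at ha hb
  rcases ha with rfl | rfl <;> rcases hb with rfl | rfl <;> simp_all [lt_asymm hab]

section Registers

variable {N : ℕ} {D : Fin N → ℕ}

theorem image_fst_map_sigmaMk {i : Fin N} {T : Finset (Fin (D i))} (hT : T.Nonempty) :
    (T.map (.sigmaMk i) : Finset ((i : Fin N) × Fin (D i))).image Sigma.fst = {i} := by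
  rw [Finset.map_eq_image, Finset.image_image]
  exact Finset.image_const hT i

theorem image_fst_map_sigmaMk_union {i j : Fin N} {Ti : Finset (Fin (D i))}
    {Tj : Finset (Fin (D j))} (hi : Ti.Nonempty) (hj : Tj.Nonempty) :
    (Ti.map (.sigmaMk i) ∪ Tj.map (.sigmaMk j) : Finset ((i : Fin N) × Fin (D i))).image Sigma.fst
      = {i, j} := by
  rw [Finset.image_union, image_fst_map_sigmaMk hi, image_fst_map_sigmaMk hj, Finset.insert_eq]

theorem map_sigmaMk_ne_union {i i' j' : Fin N} (hij' : i' ≠ j') {T : Finset (Fin (D i))}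
    {Ti : Finset (Fin (D i'))} {Tj : Finset (Fin (D j'))} (hT : T.Nonempty) (hi : Ti.Nonempty)
    (hj : Tj.Nonempty) :
    (T.map (.sigmaMk i) : Finset ((i : Fin N) × Fin (D i)))
      ≠ Ti.map (.sigmaMk i') ∪ Tj.map (.sigmaMk j') := by
  intro h
  have hcard := congrArg (fun S => (S.image Sigma.fst).card) h
  simp only [image_fst_map_sigmaMk hT, image_fst_map_sigmaMk_union hi hj,
    Finset.card_singleton, Finset.card_pair hij'] at hcard
  omega

theorem disjoint_map_sigmaMk {i j : Fin N} (hij : i ≠ j) (Ti : Finset (Fin (D i)))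
    (Tj : Finset (Fin (D j))) :
    Disjoint (Ti.map (.sigmaMk i) : Finset ((i : Fin N) × Fin (D i))) (Tj.map (.sigmaMk j)) := by
  simp [Finset.disjoint_left, hij.symm]

theorem mem_map_sigmaMk_union_left {i j : Fin N} (hij : i ≠ j) {Ti : Finset (Fin (D i))}
    {Tj : Finset (Fin (D j))} {q : Fin (D i)} :
    (⟨i, q⟩ : (i : Fin N) × Fin (D i)) ∈ Ti.map (.sigmaMk i) ∪ Tj.map (.sigmaMk j) ↔ q ∈ Ti := by
  simp [hij.symm]

theorem mem_map_sigmaMk_union_right {i j : Fin N} (hij : i ≠ j) {Ti : Finset (Fin (D i))}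
    {Tj : Finset (Fin (D j))} {q : Fin (D j)} :
    (⟨j, q⟩ : (i : Fin N) × Fin (D i)) ∈ Ti.map (.sigmaMk i) ∪ Tj.map (.sigmaMk j) ↔ q ∈ Tj := by
  simp [hij]

end Registers

section EncodedCost

variable {N : ℕ} (D m : Fin N → ℕ) (s : ∀ i, Fin (m i) → Fin (D i) → ℝ)
  (α : ∀ i, Fin (m i) → ℝ) (β : ∀ i j, Fin (m i) → Fin (m j) → ℝ)

noncomputable def unaryCoeff (i : Fin N) (T : Finset (Fin (D i))) : ℝ :=
  ((2 : ℝ) ^ D i)⁻¹ * ∑ c : Fin (m i), α i c * ∏ q ∈ T, s i c q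

noncomputable def pairCoeff (i j : Fin N) (Ti : Finset (Fin (D i))) (Tj : Finset (Fin (D j))) :
    ℝ :=
  ((2 : ℝ) ^ (D i + D j))⁻¹ *
    ∑ ci : Fin (m i), ∑ cj : Fin (m j), β i j ci cj * (∏ q ∈ Ti, s i ci q) * ∏ q ∈ Tj, s j cj q

abbrev MonomialLabel : Type :=
  (Σ i : Fin N, Finset (Fin (D i))) ⊕ (Σ i j : Fin N, Finset (Fin (D i)) × Finset (Fin (D j)))

def monomialSupport : MonomialLabel D → Finset ((i : Fin N) × Fin (D i))
  | .inl ⟨i, T⟩ => T.map (.sigmaMk i)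
  | .inr ⟨i, j, Ti, Tj⟩ => Ti.map (.sigmaMk i) ∪ Tj.map (.sigmaMk j)

noncomputable def monomialCoeff : MonomialLabel D → ℝ
  | .inl ⟨i, T⟩ => unaryCoeff D m s α i T
  | .inr ⟨i, j, Ti, Tj⟩ => if i < j then pairCoeff D m s β i j Ti Tj else 0

theorem indicatorPoly_eq_sum (i : Fin N) (c : Fin (m i)) (z : (i : Fin N) × Fin (D i) → ℝ) :
    indicatorPoly D m s i c z
      = ((2 : ℝ) ^ D i)⁻¹ *
          ∑ T : Finset (Fin (D i)), (∏ q ∈ T, s i c q) * ∏ p ∈ T.map (.sigmaMk i), z p := by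
  simp_rw [indicatorPoly, Finset.prod_one_add, Finset.powerset_univ, Finset.prod_map,
    Finset.prod_mul_distrib]
  rfl

theorem sum_mul_indicatorPoly (i : Fin N) (z : (i : Fin N) × Fin (D i) → ℝ) :
    ∑ c, α i c * indicatorPoly D m s i c z
      = ∑ T : Finset (Fin (D i)), unaryCoeff D m s α i T * ∏ p ∈ T.map (.sigmaMk i), z p := by
  simp_rw [indicatorPoly_eq_sum, unaryCoeff, Finset.mul_sum, Finset.sum_mul]
  rw [Finset.sum_comm]
  refine Finset.sum_congr rfl fun T _ => Finset.sum_congr rfl fun c _ => by ring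

theorem indicatorPoly_mul_indicatorPoly {i j : Fin N} (hij : i ≠ j) (ci : Fin (m i))
    (cj : Fin (m j)) (z : (i : Fin N) × Fin (D i) → ℝ) :
    indicatorPoly D m s i ci z * indicatorPoly D m s j cj z
      = ((2 : ℝ) ^ (D i + D j))⁻¹ * ∑ T : Finset (Fin (D i)) × Finset (Fin (D j)),
          (∏ q ∈ T.1, s i ci q) * (∏ q ∈ T.2, s j cj q) *
            ∏ p ∈ T.1.map (.sigmaMk i) ∪ T.2.map (.sigmaMk j), z p := by
  simp_rw [indicatorPoly_eq_sum, Fintype.sum_prod_type, Finset.prod_union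
    (disjoint_map_sigmaMk hij _ _), pow_add, mul_inv]
  rw [mul_mul_mul_comm, Finset.sum_mul_sum]
  congr 1
  exact Finset.sum_congr rfl fun Ti _ => Finset.sum_congr rfl fun Tj _ => mul_mul_mul_comm ..

theorem sum_mul_indicatorPoly_mul_indicatorPoly {i j : Fin N} (hij : i ≠ j)
    (z : (i : Fin N) × Fin (D i) → ℝ) :
    ∑ ci, ∑ cj, β i j ci cj * indicatorPoly D m s i ci z * indicatorPoly D m s j cj z
      = ∑ T : Finset (Fin (D i)) × Finset (Fin (D j)),
          pairCoeff D m s β i j T.1 T.2 * ∏ p ∈ T.1.map (.sigmaMk i) ∪ T.2.map (.sigmaMk j), z p := by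
  rw [← Fintype.sum_prod_type']
  calc _ = ∑ c : Fin (m i) × Fin (m j), ∑ T : Finset (Fin (D i)) × Finset (Fin (D j)),
        ((2 : ℝ) ^ (D i + D j))⁻¹ * (β i j c.1 c.2 * (∏ q ∈ T.1, s i c.1 q) * ∏ q ∈ T.2, s j c.2 q)
          * ∏ p ∈ T.1.map (.sigmaMk i) ∪ T.2.map (.sigmaMk j), z p := by
        simp_rw [mul_assoc, indicatorPoly_mul_indicatorPoly D m s hij, Finset.mul_sum]
        exact Finset.sum_congr rfl fun c _ => Finset.sum_congr rfl fun T _ => by ring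
    _ = _ := by
        rw [Finset.sum_comm]
        simp_rw [pairCoeff, ← Fintype.sum_prod_type' (f := fun ci cj => β i j ci cj * _ * _),
          Finset.mul_sum, Finset.sum_mul]

theorem encodedF_eq_sum_monomial :
    encodedF D m s α β
      = fun z => ∑ x, monomialCoeff D m s α β x * ∏ p ∈ monomialSupport D x, z p := by
  funext z
  simp only [encodedF, Fintype.sum_sum_type, Fintype.sum_sigma, monomialCoeff, monomialSupport,
    sum_mul_indicatorPoly]
  congr 1
  refine Finset.sum_congr rfl fun i _ => Finset.sum_congr rfl fun j _ => ?_
  split_ifs with hij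
  · exact sum_mul_indicatorPoly_mul_indicatorPoly D m s β hij.ne z
  · simp only [zero_mul, Finset.sum_const_zero]

variable {D m s α β}

theorem pairCoeff_empty_right {i j : Fin N} (hrow : ∀ ci, ∑ cj, β i j ci cj = 0)
    (Ti : Finset (Fin (D i))) : pairCoeff D m s β i j Ti ∅ = 0 := by
  simp [pairCoeff, ← Finset.sum_mul, hrow]

theorem pairCoeff_empty_left {i j : Fin N} (hcol : ∀ cj, ∑ ci, β i j ci cj = 0)
    (Tj : Finset (Fin (D j))) : pairCoeff D m s β i j ∅ Tj = 0 := by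
  rw [pairCoeff, Finset.sum_comm]
  simp [← Finset.sum_mul, hcol]

theorem nonempty_of_pairCoeff_ne_zero {i j : Fin N} (hrow : ∀ ci, ∑ cj, β i j ci cj = 0)
    (hcol : ∀ cj, ∑ ci, β i j ci cj = 0) {Ti : Finset (Fin (D i))} {Tj : Finset (Fin (D j))}
    (h : pairCoeff D m s β i j Ti Tj ≠ 0) : Ti.Nonempty ∧ Tj.Nonempty := by
  refine ⟨Finset.nonempty_iff_ne_empty.2 ?_, Finset.nonempty_iff_ne_empty.2 ?_⟩
  · rintro rfl
    exact h (pairCoeff_empty_left hcol Tj)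
  · rintro rfl
    exact h (pairCoeff_empty_right hrow Ti)

theorem eq_of_monomialSupport_eq
    (hrow : ∀ i j, i < j → ∀ ci : Fin (m i), ∑ cj : Fin (m j), β i j ci cj = 0)
    (hcol : ∀ i j, i < j → ∀ cj : Fin (m j), ∑ ci : Fin (m i), β i j ci cj = 0)
    {x y : MonomialLabel D} (hx : (monomialSupport D x).Nonempty)
    (hwx : monomialCoeff D m s α β x ≠ 0) (hwy : monomialCoeff D m s α β y ≠ 0)
    (h : monomialSupport D x = monomialSupport D y) : x = y := by
  have hpair {i j : Fin N} {Ti : Finset (Fin (D i))} {Tj : Finset (Fin (D j))}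
      (h : monomialCoeff D m s α β (.inr ⟨i, j, Ti, Tj⟩) ≠ 0) :
      i < j ∧ Ti.Nonempty ∧ Tj.Nonempty := by
    simp only [monomialCoeff] at h
    split_ifs at h with hij
    · exact ⟨hij, nonempty_of_pairCoeff_ne_zero (hrow i j hij) (hcol i j hij) h⟩
    · exact absurd rfl h
  rcases x with ⟨i, T⟩ | ⟨i, j, Ti, Tj⟩ <;> rcases y with ⟨i', T'⟩ | ⟨i', j', Ti', Tj'⟩ <;>
    simp only [monomialSupport] at h hx
  · have hreg := congrArg (Finset.image Sigma.fst) h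
    rw [image_fst_map_sigmaMk (Finset.map_nonempty.1 hx),
      image_fst_map_sigmaMk (Finset.map_nonempty.1 (h ▸ hx)), Finset.singleton_inj] at hreg
    subst hreg
    rw [Finset.map_inj.1 h]
  · obtain ⟨hlt, hi, hj⟩ := hpair hwy
    exact absurd h (map_sigmaMk_ne_union hlt.ne (Finset.map_nonempty.1 hx) hi hj)
  · obtain ⟨hlt, hi, hj⟩ := hpair hwx
    exact absurd h.symm (map_sigmaMk_ne_union hlt.ne (Finset.map_nonempty.1 (h ▸ hx)) hi hj)
  · obtain ⟨hlt, hi, hj⟩ := hpair hwx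
    obtain ⟨hlt', hi', hj'⟩ := hpair hwy
    have hreg := congrArg (Finset.image Sigma.fst) h
    rw [image_fst_map_sigmaMk_union hi hj, image_fst_map_sigmaMk_union hi' hj'] at hreg
    obtain ⟨rfl, rfl⟩ := Finset.eq_and_eq_of_pair_eq_pair hlt hlt' hreg
    have hTi : Ti = Ti' := by
      ext q
      rw [← mem_map_sigmaMk_union_left hlt.ne (Tj := Tj), h, mem_map_sigmaMk_union_left hlt.ne]
    have hTj : Tj = Tj' := by
      ext q
      rw [← mem_map_sigmaMk_union_right hlt.ne (Ti := Ti), h, mem_map_sigmaMk_union_right hlt.ne]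
    rw [hTi, hTj]

theorem pairPower_eq_sum_card_add_eq {i j : Fin N} (hrow : ∀ ci, ∑ cj, β i j ci cj = 0)
    (hcol : ∀ cj, ∑ ci, β i j ci cj = 0) (k : ℕ) :
    pairPower D m s β i j k
      = ∑ T : Finset (Fin (D i)) × Finset (Fin (D j)) with T.1.card + T.2.card = k,
          pairCoeff D m s β i j T.1 T.2 ^ 2 := by
  rw [← Finset.sum_filter_of_ne (p := fun T => T.1.Nonempty ∧ T.2.Nonempty), Finset.filter_filter]
  · simp only [pairPower, and_comm, and_assoc]
    rfl
  · intro T _ hT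
    exact nonempty_of_pairCoeff_ne_zero hrow hcol (pow_ne_zero_iff two_ne_zero |>.1 hT)

theorem sum_sq_monomialCoeff
    (hrow : ∀ i j, i < j → ∀ ci : Fin (m i), ∑ cj : Fin (m j), β i j ci cj = 0)
    (hcol : ∀ i j, i < j → ∀ cj : Fin (m j), ∑ ci : Fin (m i), β i j ci cj = 0) (k : ℕ) :
    ∑ x with (monomialSupport D x).card = k, monomialCoeff D m s α β x ^ 2
      = (∑ i, unaryPower D m s α i k) +
          ∑ i, ∑ j, if i < j then pairPower D m s β i j k else 0 := by
  rw [Finset.sum_filter, Fintype.sum_sum_type]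
  simp only [Fintype.sum_sigma, monomialSupport, monomialCoeff, Finset.card_map]
  congr 1
  · simp only [unaryPower, unaryCoeff, Finset.sum_filter]
  refine Finset.sum_congr rfl fun i _ => Finset.sum_congr rfl fun j _ => ?_
  split_ifs with hij
  · rw [pairPower_eq_sum_card_add_eq (hrow i j hij) (hcol i j hij), Finset.sum_filter]
    refine Finset.sum_congr rfl fun T _ => ?_
    rw [Finset.card_union_of_disjoint (disjoint_map_sigmaMk hij.ne _ _), Finset.card_map,
      Finset.card_map]
  · simp

end EncodedCost

section Vanishing

variable {N : ℕ} {D m : Fin N → ℕ} {s : ∀ i, Fin (m i) → Fin (D i) → ℝ}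

theorem unaryPower_eq_zero_of_lt {α : ∀ i, Fin (m i) → ℝ} {i : Fin N} {k : ℕ} (h : D i < k) :
    unaryPower D m s α i k = 0 := by
  refine Finset.sum_eq_zero fun T hT => absurd (Finset.mem_filter.1 hT).2 ?_
  have := Finset.card_le_univ T
  rw [Fintype.card_fin] at this
  omega

theorem pairPower_eq_zero {β : ∀ i j, Fin (m i) → Fin (m j) → ℝ} {i j : Fin N} {k : ℕ}
    (h : k ≤ 1 ∨ D i + D j < k) : pairPower D m s β i j k = 0 := by
  refine Finset.sum_eq_zero fun T hT => ?_
  obtain ⟨hi, hj, hk⟩ := (Finset.mem_filter.1 hT).2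
  have hi' := Finset.card_le_univ T.1
  have hj' := Finset.card_le_univ T.2
  rw [Fintype.card_fin] at hi' hj'
  have := hi.card_pos
  have := hj.card_pos
  omega

end Vanishing

theorem stmt17_general {N : ℕ} (D m : Fin N → ℕ)
    (s : ∀ i, Fin (m i) → Fin (D i) → ℝ)
    (α : ∀ i, Fin (m i) → ℝ) (β : ∀ i j, Fin (m i) → Fin (m j) → ℝ)
    (hrow : ∀ i j, i < j → ∀ ci : Fin (m i), ∑ cj : Fin (m j), β i j ci cj = 0)
    (hcol : ∀ i j, i < j → ∀ cj : Fin (m j), ∑ ci : Fin (m i), β i j ci cj = 0)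
    (k : ℕ) (hk : 1 ≤ k) :
    (specPower D m s α β k =
      (∑ i : Fin N, unaryPower D m s α i k) +
        ∑ i : Fin N, ∑ j : Fin N,
          if i < j then pairPower D m s β i j k else 0) ∧
    (∀ i : Fin N, D i < k → unaryPower D m s α i k = 0) ∧
    (∀ i j : Fin N, i < j → (k ≤ 1 ∨ D i + D j < k) → pairPower D m s β i j k = 0) := by
  refine ⟨?_, fun i => unaryPower_eq_zero_of_lt, fun i j _ => pairPower_eq_zero⟩
  have hsupp : ∀ x y, (monomialSupport D x).card = k → monomialCoeff D m s α β x ≠ 0 →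
      monomialCoeff D m s α β y ≠ 0 → monomialSupport D x = monomialSupport D y → x = y :=
    fun x y hx => eq_of_monomialSupport_eq hrow hcol (Finset.card_pos.1 (by omega))
  rw [specPower, encodedF_eq_sum_monomial, sum_sq_walshCoeff_sum_monomial _ _ k hsupp,
    sum_sq_monomialCoeff hrow hcol]

/-- Additive spectral decomposition: for every `k ≥ 1`,
`P_k = ∑_i P_k^{(i)} + ∑_{i<j} P_k^{(i,j)}`; moreover `P_k^{(i)} = 0` for `k > D_i`, and
`P_k^{(i,j)} = 0` for `k ≤ 1` or `k > D_i + D_j`. -/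
theorem stmt17 {N : ℕ} (D m : Fin N → ℕ) (hm : ∀ i, m i ≤ 2 ^ D i)
    (s : ∀ i, Fin (m i) → Fin (D i) → ℝ)
    (hs : ∀ i c q, s i c q = 1 ∨ s i c q = -1)
    (hinj : ∀ i, Function.Injective (s i))
    (α : ∀ i, Fin (m i) → ℝ) (β : ∀ i j, Fin (m i) → Fin (m j) → ℝ)
    (hrow : ∀ i j, i < j → ∀ ci : Fin (m i), ∑ cj : Fin (m j), β i j ci cj = 0)
    (hcol : ∀ i j, i < j → ∀ cj : Fin (m j), ∑ ci : Fin (m i), β i j ci cj = 0)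
    (k : ℕ) (hk : 1 ≤ k) :
    (specPower D m s α β k =
      (∑ i : Fin N, unaryPower D m s α i k) +
        ∑ i : Fin N, ∑ j : Fin N,
          if i < j then pairPower D m s β i j k else 0) ∧
    (∀ i : Fin N, D i < k → unaryPower D m s α i k = 0) ∧
    (∀ i j : Fin N, i < j → (k ≤ 1 ∨ D i + D j < k) → pairPower D m s β i j k = 0) :=
  stmt17_general D m s α β hrow hcol k hk
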